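/- For all Q, Q′ ∈ Cfg⋆ there exists a unary polynomial F of K such that F(β^j(Q)) = β^j(Q′) for all j ∈ {0,1,2}. (Lemma 4.2(1).) -/
import Mathlib


namespace Paper

/-- Direction of a Turing-machine head move. -/
inductive Dir : Type
  | L | R
deriving DecidableEq

/-- A Turing machine with states μ₀, μ₁, …, μ_k (μ₀ the halting state): for each state
μ_i with 1 ≤ i ≤ k and each tape symbol r, exactly one instruction μ_i r s D μ_m,
recorded as `instr i r = (s, D, m)`.  (The value of `instr` at `i = 0` is irrelevant:
no instruction begins with μ₀.) -/
structure TM (k : ℕ) : Type where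
  instr : Fin (k + 1) → Bool → Bool × Dir × Fin (k + 1)

/-- The universe of the algebra B(T):
`zero` = 0, `P j` = P_j, `one`,`two`,`H` the sequential elements U, and the machine
elements `C b i r s` = C_{ir}^s, `D b i r s` = D_{ir}^s, `M b i r` = M_i^r, where
`b = true` marks the barred copy V̄. -/
inductive BT (k : ℕ) : Type
  | zero : BT k
  | P : Fin 3 → BT k
  | one : BT k
  | two : BT k
  | H : BT k
  | C : Bool → Fin (k + 1) → Bool → Bool → BT k
  | D : Bool → Fin (k + 1) → Bool → Bool → BT k
  | M : Bool → Fin (k + 1) → Bool → BT k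
deriving DecidableEq

namespace BT

variable {k : ℕ}

/-- The partial order of B(T): x ≤ y iff x = 0, or x = y, or (x = P₂ and y ∈ {P₀,P₁}). -/
def le (x y : BT k) : Prop :=
  x = zero ∨ x = y ∨ (x = P 2 ∧ (y = P 0 ∨ y = P 1))

/-- x ∧ y: the greatest lower bound for `le`. -/
def meet (x y : BT k) : BT k :=
  if x = y then x
  else if x = P 2 ∧ (y = P 0 ∨ y = P 1) then P 2
  else if y = P 2 ∧ (x = P 0 ∨ x = P 1) then P 2
  else if (x = P 0 ∨ x = P 1) ∧ (y = P 0 ∨ y = P 1) then P 2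
  else zero

/-- membership in P = {P₀,P₁,P₂} -/
def isP : BT k → Bool
  | P _ => true
  | _ => false

/-- membership in U = {1,2,H} -/
def isU : BT k → Bool
  | one => true
  | two => true
  | H => true
  | _ => false

/-- membership in V ∪ V̄ -/
def isVV : BT k → Bool
  | C _ _ _ _ => true
  | D _ _ _ _ => true
  | M _ _ _ => true
  | _ => false

/-- membership in U ∪ V ∪ V̄ -/
def isUVV (x : BT k) : Bool := isU x || isVV x

/-- membership in V₀ = {C_{0r}^s, D_{0r}^s, M₀^r} (unbarred, state μ₀) -/
def isV0 : BT k → Bool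
  | C false i _ _ => i == 0
  | D false i _ _ => i == 0
  | M false i _ => i == 0
  | _ => false

/-- membership in V₁₀⁰ = {C₁₀⁰, M₁⁰, D₁₀⁰} -/
def isV10 (x : BT k) : Bool :=
  x == C false 1 false false || x == M false 1 false || x == D false 1 false false

/-- the bar involution on V ∪ V̄ (identity elsewhere) -/
def barOp : BT k → BT k
  | C b i r s => C (!b) i r s
  | D b i r s => D (!b) i r s
  | M b i r => M (!b) i r
  | x => x

/-- s₀ = C₁₀⁰, s₁ = M₁⁰, s₂ = D₁₀⁰ -/
def sel : Fin 3 → BT k := ![C false 1 false false, M false 1 false, D false 1 false false]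

/-- x ∧ⁱ y = x if x = y ∈ (P ∪ V₁₀⁰) \ {s_i}, else 0. -/
def meetI (i : Fin 3) (x y : BT k) : BT k :=
  if x = y ∧ (isP x ∨ isV10 x) ∧ x ≠ sel i then x else zero

/-- T₀(x) = P₂ if x ∈ {P₀,P₂}; P₀ if x = P₁; x if x ∈ V₀; else 0. -/
def T0 : BT k → BT k
  | P j => if j = 1 then P 0 else P 2
  | C false i r s => if i = 0 then C false i r s else zero
  | D false i r s => if i = 0 then D false i r s else zero
  | M false i r => if i = 0 then M false i r else zero
  | _ => zero

/-- T₁(x,y). -/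
def T1 (x y : BT k) : BT k :=
  if (x = P 0 ∧ y = P 0) ∨ (x = P 0 ∧ y = P 1) ∨ (x = P 1 ∧ y = P 0) ∨
     (x = P 0 ∧ y = P 2) ∨ (x = P 2 ∧ y = P 0) then P 1
  else if (x = P 1 ∨ x = P 2) ∧ (y = P 1 ∨ y = P 2) then P 2
  else if x = y ∧ isV10 x then x
  else zero

/-- J′(x,y,z) = x ∧ z if x = y or {x,y} ⊆ P; x if x = ȳ ∈ V ∪ V̄; else 0. -/
def J' (x y z : BT k) : BT k :=
  if x = y ∨ (isP x ∧ isP y) then meet x z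
  else if isVV y ∧ x = barOp y then x
  else zero

/-- the ternary discriminator: t(x,y,z) = z if x = y, else x. -/
def disc (x y z : BT k) : BT k := if x = y then z else x

/-- S₁(u,x,y,z). -/
def S1 (u x y z : BT k) : BT k :=
  if (u = one ∨ u = two) ∧ x = y ∧ y = z ∧ isUVV x then x
  else if isP x ∧ isP y ∧ isP z then disc x y z
  else zero

/-- S₂(u,v,x,y,z). -/
def S2 (u v x y z : BT k) : BT k :=
  if isVV v ∧ u = barOp v ∧ x = y ∧ y = z ∧ isVV x then x
  else if isP x ∧ isP y ∧ isP z then disc x y z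
  else zero

/-- L_{irt} for the instruction μ_i r s L μ_m (the barred clause is handled by carrying
the bar `b` of the argument through). -/
def Lop (i : Fin (k + 1)) (r s : Bool) (m : Fin (k + 1)) (t : Bool) :
    BT k → BT k → BT k → BT k := fun x y u =>
  match u with
  | P j => if x = one ∧ y = one then P j else zero
  | C b i' r' s' =>
      if x = one ∧ y = one ∧ i' = i ∧ r' = r then C b m t s'
      else if x = H ∧ y = one ∧ i' = i ∧ r' = r ∧ s' = t then M b m t
      else zero
  | M b i' r' => if x = two ∧ y = H ∧ i' = i ∧ r' = r then D b m t s else zero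
  | D b i' r' s' => if x = two ∧ y = two ∧ i' = i ∧ r' = r then D b m t s' else zero
  | _ => zero

/-- R_{irt} for the instruction μ_i r s R μ_m. -/
def Rop (i : Fin (k + 1)) (r s : Bool) (m : Fin (k + 1)) (t : Bool) :
    BT k → BT k → BT k → BT k := fun x y u =>
  match u with
  | P j => if x = one ∧ y = one then P j else zero
  | C b i' r' s' => if x = one ∧ y = one ∧ i' = i ∧ r' = r then C b m t s' else zero
  | M b i' r' => if x = H ∧ y = one ∧ i' = i ∧ r' = r then C b m t s else zero
  | D b i' r' s' =>
      if x = two ∧ y = H ∧ i' = i ∧ r' = r ∧ s' = t then M b m t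
      else if x = two ∧ y = two ∧ i' = i ∧ r' = r then D b m t s'
      else zero
  | _ => zero

end BT

/-- The forward machine operation determined by the unique instruction of T beginning
with μ_i r (for 1 ≤ i ≤ k) and the symbol t. -/
def fwd {k : ℕ} (T : TM k) (i : Fin (k + 1)) (r t : Bool) :
    BT k → BT k → BT k → BT k :=
  match T.instr i r with
  | (s, Dir.L, m) => BT.Lop i r s m t
  | (s, Dir.R, m) => BT.Rop i r s m t

/-- the reverse of a machine operation: F°(x,y,u) = v when F(x,y,v) = u ≠ 0, else 0. -/
noncomputable def revOp {k : ℕ} (F : BT k → BT k → BT k → BT k) (x y u : BT k) : BT k :=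
  haveI := Classical.propDecidable (u ≠ BT.zero ∧ ∃ v, F x y v = u)
  if h : u ≠ BT.zero ∧ ∃ v, F x y v = u then h.2.choose else BT.zero

/-- The machine operations ℳ: `b = false` gives the forward operation, `b = true` the
reverse operation. -/
noncomputable def mop {k : ℕ} (T : TM k) (i : Fin (k + 1)) (r t : Bool) (b : Bool) :
    BT k → BT k → BT k → BT k :=
  match b with
  | false => fwd T i r t
  | true => revOp (fwd T i r t)

/-- The relation ≺ on U: 2≺2, 2≺H, H≺1, 1≺1. -/
def prec {k : ℕ} : BT k → BT k → Bool
  | BT.two, BT.two => true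
  | BT.two, BT.H => true
  | BT.H, BT.one => true
  | BT.one, BT.one => true
  | _, _ => false

/-- U_i¹ built from the machine operation F. -/
def U1op {k : ℕ} (F : BT k → BT k → BT k → BT k) (x y z u : BT k) : BT k :=
  if prec x y ∧ prec x z ∧ y ≠ z ∧ BT.isVV (F x y u) then BT.barOp (F x y u)
  else if prec x y ∧ y = z then F x y u
  else BT.zero

/-- U_i² built from the machine operation F. -/
def U2op {k : ℕ} (F : BT k → BT k → BT k → BT k) (x y z u : BT k) : BT k :=
  if prec x z ∧ prec y z ∧ x ≠ y ∧ BT.isVV (F y z u) then BT.barOp (F y z u)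
  else if x = y ∧ prec y z then F y z u
  else BT.zero

/-- The n-ary polynomials of the algebra B(T): functions obtained by composing the basic
operations (the constant 0, T₀, T₁, ∧, ∧⁰, ∧¹, ∧², J′, S₁, S₂, the forward and reverse
machine operations, and the U_i¹, U_i²), coordinate projections and constants. -/
inductive PolyB {k : ℕ} (T : TM k) : {n : ℕ} → ((Fin n → BT k) → BT k) → Prop where
  | proj {n : ℕ} (i : Fin n) : PolyB T fun v => v i
  | const {n : ℕ} (c : BT k) : PolyB T fun _ : Fin n → BT k => c
  | t0 {n : ℕ} {p : (Fin n → BT k) → BT k} :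
      PolyB T p → PolyB T fun v => BT.T0 (p v)
  | t1 {n : ℕ} {p q : (Fin n → BT k) → BT k} :
      PolyB T p → PolyB T q → PolyB T fun v => BT.T1 (p v) (q v)
  | meet {n : ℕ} {p q : (Fin n → BT k) → BT k} :
      PolyB T p → PolyB T q → PolyB T fun v => BT.meet (p v) (q v)
  | meetI (j : Fin 3) {n : ℕ} {p q : (Fin n → BT k) → BT k} :
      PolyB T p → PolyB T q → PolyB T fun v => BT.meetI j (p v) (q v)
  | jop {n : ℕ} {p q r : (Fin n → BT k) → BT k} :
      PolyB T p → PolyB T q → PolyB T r → PolyB T fun v => BT.J' (p v) (q v) (r v)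
  | s1 {n : ℕ} {p q r s : (Fin n → BT k) → BT k} :
      PolyB T p → PolyB T q → PolyB T r → PolyB T s →
      PolyB T fun v => BT.S1 (p v) (q v) (r v) (s v)
  | s2 {n : ℕ} {p q r s w : (Fin n → BT k) → BT k} :
      PolyB T p → PolyB T q → PolyB T r → PolyB T s → PolyB T w →
      PolyB T fun v => BT.S2 (p v) (q v) (r v) (s v) (w v)
  | mach (i : Fin (k + 1)) (hi : i ≠ 0) (r t b : Bool) {n : ℕ}
      {p q u : (Fin n → BT k) → BT k} :
      PolyB T p → PolyB T q → PolyB T u →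
      PolyB T fun v => mop T i r t b (p v) (q v) (u v)
  | u1 (i : Fin (k + 1)) (hi : i ≠ 0) (r t b : Bool) {n : ℕ}
      {p q r' s : (Fin n → BT k) → BT k} :
      PolyB T p → PolyB T q → PolyB T r' → PolyB T s →
      PolyB T fun v => U1op (mop T i r t b) (p v) (q v) (r' v) (s v)
  | u2 (i : Fin (k + 1)) (hi : i ≠ 0) (r t b : Bool) {n : ℕ}
      {p q r' s : (Fin n → BT k) → BT k} :
      PolyB T p → PolyB T q → PolyB T r' → PolyB T s →
      PolyB T fun v => U2op (mop T i r t b) (p v) (q v) (r' v) (s v)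

/-- unary polynomials of B(T) -/
def UPolyB {k : ℕ} (T : TM k) (F : BT k → BT k) : Prop :=
  PolyB T (n := 1) fun v => F (v 0)

/-- binary polynomials of B(T) -/
def BPolyB {k : ℕ} (T : TM k) (F : BT k → BT k → BT k) : Prop :=
  PolyB T (n := 2) fun v => F (v 0) (v 1)

/-- A Turing machine configuration ⟨tape, head position, state⟩. -/
structure Cfg (k : ℕ) : Type where
  tape : ℤ → Bool
  pos : ℤ
  state : Fin (k + 1)

/-- One computation step of T (halted configurations, in state μ₀, are fixed). -/
def cfgStep {k : ℕ} (T : TM k) (c : Cfg k) : Cfg k :=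
  if c.state = 0 then c
  else
    match T.instr c.state (c.tape c.pos) with
    | (s, Dir.L, m) => ⟨Function.update c.tape c.pos s, c.pos - 1, m⟩
    | (s, Dir.R, m) => ⟨Function.update c.tape c.pos s, c.pos + 1, m⟩

/-- The initial configuration Q₀ = ⟨t₀, 0, μ₁⟩, t₀ the all-zero tape. -/
def Q0 (k : ℕ) : Cfg k := ⟨fun _ => false, 0, 1⟩

/-- N = {n₀,…,n_m} ∪ {−1,0,1}: the squares visited during the halting computation
Q₀, …, Q_m, together with −1, 0, 1. -/
def Nset {k : ℕ} (T : TM k) (m : ℕ) : Finset ℤ :=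
  ((Finset.range (m + 1)).image fun j => ((cfgStep T)^[j] (Q0 k)).pos) ∪ {-1, 0, 1}

/-- The universe of the direct power A = B(T)^Y, where Y = {s₀} ∪ N: the coordinate
`none` is the extra coordinate s₀ ∉ N, and `some x` the coordinate x ∈ N. -/
abbrev AA {k : ℕ} (T : TM k) (m : ℕ) : Type := Option {x : ℤ // x ∈ Nset T m} → BT k

/-- The sequential generator a_n (n ∈ N). -/
def aEl {k : ℕ} (T : TM k) (m : ℕ) (n : ℤ) : AA T m := fun y =>
  match y with
  | none => BT.one
  | some x => if x.1 < n then BT.one else if x.1 = n then BT.H else BT.two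

/-- The generator q^j (j ∈ {0,1,2}). -/
def qEl {k : ℕ} (T : TM k) (m : ℕ) (j : Fin 3) : AA T m := fun y =>
  match y with
  | none => BT.P j
  | some x =>
      if x.1 < 0 then BT.C false 1 false false
      else if x.1 = 0 then BT.M false 1 false
      else BT.D false 1 false false

/-- K: the subalgebra of A = B(T)^Y generated by S ∪ {q⁰,q¹,q²}
(operations computed coordinatewise). -/
inductive InK {k : ℕ} (T : TM k) (m : ℕ) : AA T m → Prop where
  | gen_a (n : ℤ) (hn : n ∈ Nset T m) : InK T m (aEl T m n)
  | gen_q (j : Fin 3) : InK T m (qEl T m j)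
  | zeroOp : InK T m fun _ => BT.zero
  | t0 {f : AA T m} : InK T m f → InK T m fun y => BT.T0 (f y)
  | t1 {f g : AA T m} : InK T m f → InK T m g → InK T m fun y => BT.T1 (f y) (g y)
  | meet {f g : AA T m} : InK T m f → InK T m g → InK T m fun y => BT.meet (f y) (g y)
  | meetI (j : Fin 3) {f g : AA T m} :
      InK T m f → InK T m g → InK T m fun y => BT.meetI j (f y) (g y)
  | jop {f g h : AA T m} : InK T m f → InK T m g → InK T m h →
      InK T m fun y => BT.J' (f y) (g y) (h y)
  | s1 {f g h p : AA T m} : InK T m f → InK T m g → InK T m h → InK T m p →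
      InK T m fun y => BT.S1 (f y) (g y) (h y) (p y)
  | s2 {f g h p q : AA T m} : InK T m f → InK T m g → InK T m h → InK T m p → InK T m q →
      InK T m fun y => BT.S2 (f y) (g y) (h y) (p y) (q y)
  | mach (i : Fin (k + 1)) (hi : i ≠ 0) (r t b : Bool) {f g h : AA T m} :
      InK T m f → InK T m g → InK T m h →
      InK T m fun y => mop T i r t b (f y) (g y) (h y)
  | u1 (i : Fin (k + 1)) (hi : i ≠ 0) (r t b : Bool) {f g h p : AA T m} :
      InK T m f → InK T m g → InK T m h → InK T m p →
      InK T m fun y => U1op (mop T i r t b) (f y) (g y) (h y) (p y)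
  | u2 (i : Fin (k + 1)) (hi : i ≠ 0) (r t b : Bool) {f g h p : AA T m} :
      InK T m f → InK T m g → InK T m h → InK T m p →
      InK T m fun y => U2op (mop T i r t b) (f y) (g y) (h y) (p y)

/-- The n-ary polynomials of the algebra K: compositions of the basic operations
(computed coordinatewise), coordinate projections, and constants from K. -/
inductive PolyK {k : ℕ} (T : TM k) (m : ℕ) :
    {n : ℕ} → ((Fin n → AA T m) → AA T m) → Prop where
  | proj {n : ℕ} (i : Fin n) : PolyK T m fun v => v i
  | const {n : ℕ} (c : AA T m) (hc : InK T m c) : PolyK T m fun _ : Fin n → AA T m => c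
  | zeroOp {n : ℕ} : PolyK T m fun (_ : Fin n → AA T m) _ => BT.zero
  | t0 {n : ℕ} {p : (Fin n → AA T m) → AA T m} :
      PolyK T m p → PolyK T m fun v y => BT.T0 (p v y)
  | t1 {n : ℕ} {p q : (Fin n → AA T m) → AA T m} :
      PolyK T m p → PolyK T m q → PolyK T m fun v y => BT.T1 (p v y) (q v y)
  | meet {n : ℕ} {p q : (Fin n → AA T m) → AA T m} :
      PolyK T m p → PolyK T m q → PolyK T m fun v y => BT.meet (p v y) (q v y)
  | meetI (j : Fin 3) {n : ℕ} {p q : (Fin n → AA T m) → AA T m} :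
      PolyK T m p → PolyK T m q → PolyK T m fun v y => BT.meetI j (p v y) (q v y)
  | jop {n : ℕ} {p q r : (Fin n → AA T m) → AA T m} :
      PolyK T m p → PolyK T m q → PolyK T m r →
      PolyK T m fun v y => BT.J' (p v y) (q v y) (r v y)
  | s1 {n : ℕ} {p q r s : (Fin n → AA T m) → AA T m} :
      PolyK T m p → PolyK T m q → PolyK T m r → PolyK T m s →
      PolyK T m fun v y => BT.S1 (p v y) (q v y) (r v y) (s v y)
  | s2 {n : ℕ} {p q r s w : (Fin n → AA T m) → AA T m} :
      PolyK T m p → PolyK T m q → PolyK T m r → PolyK T m s → PolyK T m w →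
      PolyK T m fun v y => BT.S2 (p v y) (q v y) (r v y) (s v y) (w v y)
  | mach (i : Fin (k + 1)) (hi : i ≠ 0) (r t b : Bool) {n : ℕ}
      {p q u : (Fin n → AA T m) → AA T m} :
      PolyK T m p → PolyK T m q → PolyK T m u →
      PolyK T m fun v y => mop T i r t b (p v y) (q v y) (u v y)
  | u1 (i : Fin (k + 1)) (hi : i ≠ 0) (r t b : Bool) {n : ℕ}
      {p q r' s : (Fin n → AA T m) → AA T m} :
      PolyK T m p → PolyK T m q → PolyK T m r' → PolyK T m s →
      PolyK T m fun v y => U1op (mop T i r t b) (p v y) (q v y) (r' v y) (s v y)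
  | u2 (i : Fin (k + 1)) (hi : i ≠ 0) (r t b : Bool) {n : ℕ}
      {p q r' s : (Fin n → AA T m) → AA T m} :
      PolyK T m p → PolyK T m q → PolyK T m r' → PolyK T m s →
      PolyK T m fun v y => U2op (mop T i r t b) (p v y) (q v y) (r' v y) (s v y)

/-- unary polynomials of K -/
def UPolyK {k : ℕ} (T : TM k) (m : ℕ) (F : AA T m → AA T m) : Prop :=
  PolyK T m (n := 1) fun v => F (v 0)

/-- binary polynomials of K -/
def BPolyK {k : ℕ} (T : TM k) (m : ℕ) (F : AA T m → AA T m → AA T m) : Prop :=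
  PolyK T m (n := 2) fun v => F (v 0) (v 1)

/-- Q ∈ Cfg⋆: T, started in configuration Q, reaches the halting configuration
Q_m in finitely many steps, the head visiting only squares in N. -/
def InCfgStar {k : ℕ} (T : TM k) (m : ℕ) (Q : Cfg k) : Prop :=
  ∃ j : ℕ, (cfgStep T)^[j] Q = (cfgStep T)^[m] (Q0 k) ∧
    ∀ l ≤ j, ((cfgStep T)^[l] Q).pos ∈ Nset T m

/-- β^j(Q): the encoding of the configuration Q (with P_j in coordinate s₀). -/
def betaEl {k : ℕ} (T : TM k) (m : ℕ) (j : Fin 3) (Q : Cfg k) : AA T m := fun y =>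
  match y with
  | none => BT.P j
  | some x =>
      if x.1 < Q.pos then BT.C false Q.state (Q.tape Q.pos) (Q.tape x.1)
      else if x.1 = Q.pos then BT.M false Q.state (Q.tape Q.pos)
      else BT.D false Q.state (Q.tape Q.pos) (Q.tape x.1)

/-- K₀ = {f ∈ K : f(x) = 0 for some x ∈ N}. -/
def K0 {k : ℕ} (T : TM k) (m : ℕ) : Set (AA T m) :=
  {f | InK T m f ∧ ∃ x : {x : ℤ // x ∈ Nset T m}, f (some x) = BT.zero}

/-- S = {a_n : n ∈ N}. -/
def Sset {k : ℕ} (T : TM k) (m : ℕ) : Set (AA T m) :=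
  {f | ∃ n ∈ Nset T m, f = aEl T m n}

/-- Λ = {β^j(Q) : Q ∈ Cfg⋆, j ∈ {0,1,2}}. -/
def Lam {k : ℕ} (T : TM k) (m : ℕ) : Set (AA T m) :=
  {f | ∃ (j : Fin 3) (Q : Cfg k), InCfgStar T m Q ∧ f = betaEl T m j Q}

/-- θ: (f,g) ∈ θ iff f, g ∈ K and for every unary polynomial F of K,
F(f) = q² ⇔ F(g) = q². -/
def theta {k : ℕ} (T : TM k) (m : ℕ) (f g : AA T m) : Prop :=
  InK T m f ∧ InK T m g ∧
    ∀ F : AA T m → AA T m, UPolyK T m F → (F f = qEl T m 2 ↔ F g = qEl T m 2)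

/-- A congruence of K: an equivalence relation on K preserved by all basic operations. -/
structure IsCongK {k : ℕ} (T : TM k) (m : ℕ) (R : AA T m → AA T m → Prop) : Prop where
  refl : ∀ f, InK T m f → R f f
  symm : ∀ {f g}, R f g → R g f
  trans : ∀ {f g h}, R f g → R g h → R f h
  dom : ∀ {f g}, R f g → InK T m f ∧ InK T m g
  t0 : ∀ {f f'}, R f f' → R (fun y => BT.T0 (f y)) (fun y => BT.T0 (f' y))
  t1 : ∀ {f f' g g'}, R f f' → R g g' →
    R (fun y => BT.T1 (f y) (g y)) (fun y => BT.T1 (f' y) (g' y))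
  meet : ∀ {f f' g g'}, R f f' → R g g' →
    R (fun y => BT.meet (f y) (g y)) (fun y => BT.meet (f' y) (g' y))
  meetI : ∀ (j : Fin 3) {f f' g g'}, R f f' → R g g' →
    R (fun y => BT.meetI j (f y) (g y)) (fun y => BT.meetI j (f' y) (g' y))
  jop : ∀ {f f' g g' h h'}, R f f' → R g g' → R h h' →
    R (fun y => BT.J' (f y) (g y) (h y)) (fun y => BT.J' (f' y) (g' y) (h' y))
  s1 : ∀ {f f' g g' h h' p p'}, R f f' → R g g' → R h h' → R p p' →
    R (fun y => BT.S1 (f y) (g y) (h y) (p y))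
      (fun y => BT.S1 (f' y) (g' y) (h' y) (p' y))
  s2 : ∀ {f f' g g' h h' p p' q q'}, R f f' → R g g' → R h h' → R p p' → R q q' →
    R (fun y => BT.S2 (f y) (g y) (h y) (p y) (q y))
      (fun y => BT.S2 (f' y) (g' y) (h' y) (p' y) (q' y))
  mach : ∀ (i : Fin (k + 1)), i ≠ 0 → ∀ (r t b : Bool) {f f' g g' h h'},
    R f f' → R g g' → R h h' →
    R (fun y => mop T i r t b (f y) (g y) (h y))
      (fun y => mop T i r t b (f' y) (g' y) (h' y))
  u1 : ∀ (i : Fin (k + 1)), i ≠ 0 → ∀ (r t b : Bool) {f f' g g' h h' p p'},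
    R f f' → R g g' → R h h' → R p p' →
    R (fun y => U1op (mop T i r t b) (f y) (g y) (h y) (p y))
      (fun y => U1op (mop T i r t b) (f' y) (g' y) (h' y) (p' y))
  u2 : ∀ (i : Fin (k + 1)), i ≠ 0 → ∀ (r t b : Bool) {f f' g g' h h' p p'},
    R f f' → R g g' → R h h' → R p p' →
    R (fun y => U2op (mop T i r t b) (f y) (g y) (h y) (p y))
      (fun y => U2op (mop T i r t b) (f' y) (g' y) (h' y) (p' y))

/-- θ̄: the smallest congruence of K containing θ ∪ {(q⁰,q²)} (the intersection of all
congruences of K containing θ and (q⁰,q²)). -/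
def thetaBar {k : ℕ} (T : TM k) (m : ℕ) (f g : AA T m) : Prop :=
  InK T m f ∧ InK T m g ∧
    ∀ R : AA T m → AA T m → Prop, IsCongK T m R → (∀ a b, theta T m a b → R a b) →
      R (qEl T m 0) (qEl T m 2) → R f g


section Aux

variable {k : ℕ}

lemma Lop_inj {i : Fin (k+1)} {r s : Bool} {m' : Fin (k+1)} {t : Bool}
    {x y v v' : BT k} (h : BT.Lop i r s m' t x y v = BT.Lop i r s m' t x y v')
    (hz : BT.Lop i r s m' t x y v ≠ BT.zero) : v = v' := by
  cases v <;> cases v' <;> simp only [BT.Lop] at h hz <;>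
    (try split_ifs at h hz) <;> simp_all

lemma Rop_inj {i : Fin (k+1)} {r s : Bool} {m' : Fin (k+1)} {t : Bool}
    {x y v v' : BT k} (h : BT.Rop i r s m' t x y v = BT.Rop i r s m' t x y v')
    (hz : BT.Rop i r s m' t x y v ≠ BT.zero) : v = v' := by
  cases v <;> cases v' <;> simp only [BT.Rop] at h hz <;>
    (try split_ifs at h hz) <;> simp_all

lemma fwd_inj (T : TM k) (i : Fin (k+1)) (r t : Bool) (x y : BT k)
    {v v' : BT k} (h : fwd T i r t x y v = fwd T i r t x y v')
    (hz : fwd T i r t x y v ≠ BT.zero) : v = v' := by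
  unfold fwd at h hz
  rcases hins : T.instr i r with ⟨s, D, m'⟩
  rw [hins] at h hz
  cases D
  · exact Lop_inj h hz
  · exact Rop_inj h hz

lemma revOp_fwd (T : TM k) (i : Fin (k+1)) (r t : Bool) (x y : BT k) {v : BT k}
    (hz : fwd T i r t x y v ≠ BT.zero) :
    revOp (fwd T i r t) x y (fwd T i r t x y v) = v := by
  have hcond : fwd T i r t x y v ≠ BT.zero ∧ ∃ w, fwd T i r t x y w = fwd T i r t x y v :=
    ⟨hz, v, rfl⟩
  unfold revOp
  rw [dif_pos hcond]
  refine fwd_inj T i r t x y hcond.2.choose_spec ?_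
  rw [hcond.2.choose_spec]; exact hz

lemma betaEl_ne_zero (T : TM k) (m : ℕ) (j : Fin 3) (Q : Cfg k)
    (y : Option {x : ℤ // x ∈ Nset T m}) : betaEl T m j Q y ≠ BT.zero := by
  cases y <;> simp only [betaEl] <;> (try split_ifs) <;> simp

lemma PolyK.subst {T : TM k} {m n n' : ℕ} {p : (Fin n → AA T m) → AA T m}
    (hp : PolyK T m p) (g : Fin n → (Fin n' → AA T m) → AA T m)
    (hg : ∀ i, PolyK T m (g i)) :
    PolyK T m fun v => p (fun i => g i v) := by
  induction hp with
  | proj i => exact hg i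
  | const c hc => exact PolyK.const c hc
  | zeroOp => exact PolyK.zeroOp
  | t0 _ ih => exact PolyK.t0 (ih g hg)
  | t1 _ _ ih1 ih2 => exact PolyK.t1 (ih1 g hg) (ih2 g hg)
  | meet _ _ ih1 ih2 => exact PolyK.meet (ih1 g hg) (ih2 g hg)
  | meetI j _ _ ih1 ih2 => exact PolyK.meetI j (ih1 g hg) (ih2 g hg)
  | jop _ _ _ ih1 ih2 ih3 => exact PolyK.jop (ih1 g hg) (ih2 g hg) (ih3 g hg)
  | s1 _ _ _ _ ih1 ih2 ih3 ih4 =>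
      exact PolyK.s1 (ih1 g hg) (ih2 g hg) (ih3 g hg) (ih4 g hg)
  | s2 _ _ _ _ _ ih1 ih2 ih3 ih4 ih5 =>
      exact PolyK.s2 (ih1 g hg) (ih2 g hg) (ih3 g hg) (ih4 g hg) (ih5 g hg)
  | mach i hi r t b _ _ _ ih1 ih2 ih3 =>
      exact PolyK.mach i hi r t b (ih1 g hg) (ih2 g hg) (ih3 g hg)
  | u1 i hi r t b _ _ _ _ ih1 ih2 ih3 ih4 =>
      exact PolyK.u1 i hi r t b (ih1 g hg) (ih2 g hg) (ih3 g hg) (ih4 g hg)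
  | u2 i hi r t b _ _ _ _ ih1 ih2 ih3 ih4 =>
      exact PolyK.u2 i hi r t b (ih1 g hg) (ih2 g hg) (ih3 g hg) (ih4 g hg)

lemma UPolyK_comp {T : TM k} {m : ℕ} {F G : AA T m → AA T m}
    (hF : UPolyK T m F) (hG : UPolyK T m G) : UPolyK T m fun a => F (G a) :=
  PolyK.subst hF (fun _ v => G (v 0)) (fun _ => hG)

lemma step_lemma (T : TM k) (m : ℕ) (Q : Cfg k) (h0 : Q.state ≠ 0)
    (h1 : Q.pos ∈ Nset T m) (h2 : (cfgStep T Q).pos ∈ Nset T m) :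
    (∃ F, UPolyK T m F ∧ ∀ j, F (betaEl T m j Q) = betaEl T m j (cfgStep T Q)) ∧
    (∃ G, UPolyK T m G ∧ ∀ j, G (betaEl T m j (cfgStep T Q)) = betaEl T m j Q) := by
  rcases hins : T.instr Q.state (Q.tape Q.pos) with ⟨s, D, m'⟩
  cases D with
  | L =>
    have hQ' : cfgStep T Q = ⟨Function.update Q.tape Q.pos s, Q.pos - 1, m'⟩ := by
      unfold cfgStep; rw [if_neg h0, hins]
    have h2' : Q.pos - 1 ∈ Nset T m := by rw [hQ'] at h2; exact h2
    have hfwd : fwd T Q.state (Q.tape Q.pos) (Q.tape (Q.pos - 1))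
        = BT.Lop Q.state (Q.tape Q.pos) s m' (Q.tape (Q.pos - 1)) := by
      unfold fwd; rw [hins]
    have key : ∀ (j : Fin 3) y,
        fwd T Q.state (Q.tape Q.pos) (Q.tape (Q.pos - 1))
          (aEl T m (Q.pos - 1) y) (aEl T m Q.pos y)
          (betaEl T m j Q y) = betaEl T m j (cfgStep T Q) y := by
      intro j y
      rw [hfwd, hQ']
      cases y with
      | none => simp [aEl, betaEl, BT.Lop]
      | some x =>
        simp only [aEl, betaEl, Function.update_apply]
        split_ifs
        all_goals first | omega | simp_all [BT.Lop]
    refine ⟨⟨fun u y => mop T Q.state (Q.tape Q.pos) (Q.tape (Q.pos - 1)) false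
        (aEl T m (Q.pos - 1) y) (aEl T m Q.pos y) (u y), ?_, ?_⟩,
      ⟨fun u y => mop T Q.state (Q.tape Q.pos) (Q.tape (Q.pos - 1)) true
        (aEl T m (Q.pos - 1) y) (aEl T m Q.pos y) (u y), ?_, ?_⟩⟩
    · exact PolyK.mach Q.state h0 _ _ false (PolyK.const _ (InK.gen_a _ h2'))
        (PolyK.const _ (InK.gen_a _ h1)) (PolyK.proj 0)
    · intro j; funext y; exact key j y
    · exact PolyK.mach Q.state h0 _ _ true (PolyK.const _ (InK.gen_a _ h2'))
        (PolyK.const _ (InK.gen_a _ h1)) (PolyK.proj 0)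
    · intro j; funext y
      have hk := key j y
      have hnz : fwd T Q.state (Q.tape Q.pos) (Q.tape (Q.pos - 1))
          (aEl T m (Q.pos - 1) y) (aEl T m Q.pos y) (betaEl T m j Q y) ≠ BT.zero := by
        rw [hk]; exact betaEl_ne_zero T m j _ y
      show mop T Q.state (Q.tape Q.pos) (Q.tape (Q.pos - 1)) true
        (aEl T m (Q.pos - 1) y) (aEl T m Q.pos y)
        (betaEl T m j (cfgStep T Q) y) = betaEl T m j Q y
      rw [← hk]
      exact revOp_fwd T _ _ _ _ _ hnz
  | R =>
    have hQ' : cfgStep T Q = ⟨Function.update Q.tape Q.pos s, Q.pos + 1, m'⟩ := by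
      unfold cfgStep; rw [if_neg h0, hins]
    have h2' : Q.pos + 1 ∈ Nset T m := by rw [hQ'] at h2; exact h2
    have hfwd : fwd T Q.state (Q.tape Q.pos) (Q.tape (Q.pos + 1))
        = BT.Rop Q.state (Q.tape Q.pos) s m' (Q.tape (Q.pos + 1)) := by
      unfold fwd; rw [hins]
    have key : ∀ (j : Fin 3) y,
        fwd T Q.state (Q.tape Q.pos) (Q.tape (Q.pos + 1))
          (aEl T m Q.pos y) (aEl T m (Q.pos + 1) y)
          (betaEl T m j Q y) = betaEl T m j (cfgStep T Q) y := by
      intro j y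
      rw [hfwd, hQ']
      cases y with
      | none => simp [aEl, betaEl, BT.Rop]
      | some x =>
        simp only [aEl, betaEl, Function.update_apply]
        split_ifs
        all_goals first | omega | simp_all [BT.Rop]
    refine ⟨⟨fun u y => mop T Q.state (Q.tape Q.pos) (Q.tape (Q.pos + 1)) false
        (aEl T m Q.pos y) (aEl T m (Q.pos + 1) y) (u y), ?_, ?_⟩,
      ⟨fun u y => mop T Q.state (Q.tape Q.pos) (Q.tape (Q.pos + 1)) true
        (aEl T m Q.pos y) (aEl T m (Q.pos + 1) y) (u y), ?_, ?_⟩⟩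
    · exact PolyK.mach Q.state h0 _ _ false (PolyK.const _ (InK.gen_a _ h1))
        (PolyK.const _ (InK.gen_a _ h2')) (PolyK.proj 0)
    · intro j; funext y; exact key j y
    · exact PolyK.mach Q.state h0 _ _ true (PolyK.const _ (InK.gen_a _ h1))
        (PolyK.const _ (InK.gen_a _ h2')) (PolyK.proj 0)
    · intro j; funext y
      have hk := key j y
      have hnz : fwd T Q.state (Q.tape Q.pos) (Q.tape (Q.pos + 1))
          (aEl T m Q.pos y) (aEl T m (Q.pos + 1) y) (betaEl T m j Q y) ≠ BT.zero := by
        rw [hk]; exact betaEl_ne_zero T m j _ y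
      show mop T Q.state (Q.tape Q.pos) (Q.tape (Q.pos + 1)) true
        (aEl T m Q.pos y) (aEl T m (Q.pos + 1) y)
        (betaEl T m j (cfgStep T Q) y) = betaEl T m j Q y
      rw [← hk]
      exact revOp_fwd T _ _ _ _ _ hnz

lemma chain_lemma (T : TM k) (m : ℕ) :
    ∀ (j : ℕ) (Q : Cfg k), (∀ l ≤ j, ((cfgStep T)^[l] Q).pos ∈ Nset T m) →
    (∃ F, UPolyK T m F ∧
        ∀ i, F (betaEl T m i Q) = betaEl T m i ((cfgStep T)^[j] Q)) ∧
    (∃ G, UPolyK T m G ∧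
        ∀ i, G (betaEl T m i ((cfgStep T)^[j] Q)) = betaEl T m i Q) := by
  intro j
  induction j with
  | zero =>
    intro Q _
    exact ⟨⟨fun a => a, PolyK.proj 0, fun _ => rfl⟩,
           ⟨fun a => a, PolyK.proj 0, fun _ => rfl⟩⟩
  | succ j ih =>
    intro Q hpos
    by_cases hs : Q.state = 0
    · have hfix : cfgStep T Q = Q := by unfold cfgStep; rw [if_pos hs]
      have heq : (cfgStep T)^[j+1] Q = (cfgStep T)^[j] Q := by
        rw [Function.iterate_succ_apply, hfix]
      rw [heq]
      exact ih Q (fun l hl => hpos l (Nat.le_succ_of_le hl))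
    · have h1 : Q.pos ∈ Nset T m := by
        have := hpos 0 (Nat.zero_le _); simpa using this
      have h2 : (cfgStep T Q).pos ∈ Nset T m := by
        have := hpos 1 (by omega); simpa using this
      obtain ⟨⟨F1, hF1, he1⟩, ⟨G1, hG1, hg1⟩⟩ := step_lemma T m Q hs h1 h2
      obtain ⟨⟨F2, hF2, he2⟩, ⟨G2, hG2, hg2⟩⟩ := ih (cfgStep T Q)
        (fun l hl => by
          rw [← Function.iterate_succ_apply]
          exact hpos (l+1) (by omega))
      rw [Function.iterate_succ_apply]
      exact ⟨⟨fun a => F2 (F1 a), UPolyK_comp hF2 hF1,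
              fun i => by show F2 (F1 (betaEl T m i Q)) = _; rw [he1 i, he2 i]⟩,
             ⟨fun a => G1 (G2 a), UPolyK_comp hG1 hG2,
              fun i => by show G1 (G2 (betaEl T m i ((cfgStep T)^[j] (cfgStep T Q)))) = _; rw [hg2 i, hg1 i]⟩⟩

end Aux

/-- Lemma 4.2(1): for all Q, Q′ ∈ Cfg⋆ there is a unary polynomial F of K
with F(β^j(Q)) = β^j(Q′) for all j ∈ {0,1,2}. -/
theorem statement12 {k : ℕ} (hk : 0 < k) (T : TM k) (m : ℕ)
    (hm : ((cfgStep T)^[m] (Q0 k)).state = 0) :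
    ∀ Q Q' : Cfg k, InCfgStar T m Q → InCfgStar T m Q' →
      ∃ F : AA T m → AA T m, UPolyK T m F ∧
        ∀ j : Fin 3, F (betaEl T m j Q) = betaEl T m j Q' := by
  intro Q Q' hQ hQ'
  obtain ⟨j, hj, hjpos⟩ := hQ
  obtain ⟨j', hj', hjpos'⟩ := hQ'
  obtain ⟨⟨F, hF, hFe⟩, -⟩ := chain_lemma T m j Q hjpos
  obtain ⟨-, ⟨G, hG, hGe⟩⟩ := chain_lemma T m j' Q' hjpos'
  refine ⟨fun a => G (F a), UPolyK_comp hG hF, fun i => ?_⟩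
  show G (F (betaEl T m i Q)) = betaEl T m i Q'
  rw [hFe i, hj, ← hj', hGe i]

end Paper
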